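/- Let a, d be complex numbers with d ≠ 0, let N be a positive integer, and let k ≥ 3 be an integer. Let M be the (k+1)×(k+1) matrix whose (i, j) entry for 1 ≤ j ≤ min(i, k) is C(i, j−1)·d^{i−j+1}, whose (i, j) entries with j ≤ k and j > i are zero, and whose last column has entries M_{i,k+1} = (a + N·d)^i − a^i for i = 1, …, k+1. Then det(M) = k! · d^k · S^{k−2}_{k+1}. -/

import Mathlib

/-!
With `P t = ∑_{r < N} (a + r d)^t`, telescoping over the progression `a, a + d, …, a + N d`
gives `(a + N d)^m - a^m = ∑_{j < m} C(m, j) d^(m-j) P j`. Hence the last column of `M` is `L P`,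
where `L` is the lower triangular matrix whose first `k` columns are those of `M` and whose last
diagonal entry is `(k + 1) d`. Replacing a column of `L` by `L P` multiplies `det L = (k+1)! d^(k+1)`
by `P k`. Unwinding the recursion, `S^j_n = ∑_{j+2 ≤ t < n} C(n, t) d^(n-t) P t`, so
`S^{k-2}_{k+1} = (k + 1) d P k`.
-/

/-- The quantities `S^j_n` from the paper: `S a d N j n` is `S^j_n`. -/
noncomputable def S (a d : ℂ) (N : ℕ) : ℕ → ℕ → ℂ
  | 0, m =>
      ((m : ℂ) / 2 - 1) * (N : ℂ) * d ^ m
        - ((m : ℂ) / 2) * d ^ (m - 2) * ((a + (N : ℂ) * d) ^ 2 - a ^ 2)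
        + (a + (N : ℂ) * d) ^ m - a ^ m
  | j + 1, n =>
      -(n.choose (j + 2) : ℂ) * (1 / ((j : ℂ) + 3)) * d ^ (n - j - 3)
          * S a d N j (j + 3)
        + S a d N j n

open Finset Matrix Nat

section

variable {R : Type*} [CommRing R]

theorem add_pow_sub_pow_eq_sum (x d : R) (m : ℕ) :
    (x + d) ^ m - x ^ m = ∑ j ∈ range m, (m.choose j : R) * d ^ (m - j) * x ^ j := by
  rw [add_pow, sum_range_succ, Nat.choose_self, Nat.sub_self, pow_zero, Nat.cast_one, mul_one,
    mul_one, add_sub_cancel_right]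
  exact sum_congr rfl fun j _ => by ring

def apPowerSum (a d : R) (N t : ℕ) : R := ∑ r ∈ range N, (a + r * d) ^ t

theorem apPowerSum_zero (a d : R) (N : ℕ) : apPowerSum a d N 0 = N := by
  simp [apPowerSum]

theorem add_mul_pow_sub_pow_eq_sum_apPowerSum (a d : R) (N m : ℕ) :
    (a + N * d) ^ m - a ^ m
      = ∑ j ∈ range m, (m.choose j : R) * d ^ (m - j) * apPowerSum a d N j := by
  have hstep (r : ℕ) : (a + (r + 1 : ℕ) * d) ^ m - (a + r * d) ^ m
      = ∑ j ∈ range m, (m.choose j : R) * d ^ (m - j) * (a + r * d) ^ j := by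
    rw [← add_pow_sub_pow_eq_sum]; push_cast; ring_nf
  calc (a + N * d) ^ m - a ^ m
      = ∑ r ∈ range N, ((a + (r + 1 : ℕ) * d) ^ m - (a + r * d) ^ m) := by
        rw [sum_range_sub (fun r : ℕ => (a + r * d) ^ m)]; simp
    _ = _ := by
        simp_rw [hstep, apPowerSum, mul_sum]
        exact sum_comm

theorem Matrix.det_updateCol_mulVec {n : Type*} [Fintype n] [DecidableEq n]
    (A : Matrix n n R) (j : n) (x : n → R) :
    (A.updateCol j (A *ᵥ x)).det = x j * A.det := by
  rw [← smul_eq_mul, ← A.det_updateCol_sum j x]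
  congr
  ext k
  simp only [mulVec, dotProduct, smul_eq_mul, mul_comm]

/-- Row `i` lists the coefficients of `(x + d)^(i+1) - x^(i+1)` in the powers `x^j`. -/
def binomialMatrix (d : R) (n : ℕ) : Matrix (Fin n) (Fin n) R :=
  Matrix.of fun i j => if j ≤ i then ((i + 1 : ℕ).choose j : R) * d ^ (i - j + 1 : ℕ) else 0

theorem det_binomialMatrix (d : R) (n : ℕ) : (binomialMatrix d n).det = n ! * d ^ n := by
  have hlower : (binomialMatrix d n).IsLowerTriangular := fun i j hij => by
    simp [binomialMatrix, not_le.mpr (show i < j from hij)]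
  rw [Matrix.det_of_isLowerTriangular _ hlower]
  simp only [binomialMatrix, of_apply, le_refl, if_true, Nat.sub_self, zero_add, pow_one,
    Nat.choose_succ_self_right, Nat.cast_add_one]
  rw [prod_mul_distrib, prod_const, Finset.card_fin,
    Fin.prod_univ_eq_prod_range (fun i => (i : R) + 1), ← prod_range_add_one_eq_factorial]
  push_cast
  rfl

theorem binomialMatrix_mulVec_apPowerSum (a d : R) (N n : ℕ) :
    binomialMatrix d n *ᵥ (fun j => apPowerSum a d N j)
      = fun i : Fin n => (a + N * d) ^ ((i : ℕ) + 1) - a ^ ((i : ℕ) + 1) := by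
  ext i
  have hrange : (range n).filter (· ≤ (i : ℕ)) = range ((i : ℕ) + 1) := by
    ext j; simp only [mem_filter, mem_range]; omega
  rw [add_mul_pow_sub_pow_eq_sum_apPowerSum, ← hrange, sum_filter]
  simp only [mulVec, dotProduct, binomialMatrix, of_apply, ite_mul, zero_mul]
  rw [← Fin.sum_univ_eq_sum_range (fun j => if j ≤ (i : ℕ) then
    ((i + 1 : ℕ).choose j : R) * d ^ (i + 1 - j : ℕ) * apPowerSum a d N j else 0)]
  refine sum_congr rfl fun j _ => ?_
  simp only [Fin.le_def]
  split_ifs with hji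
  · rw [Nat.sub_add_comm hji]
  · rfl

end

section S

variable (a d : ℂ) (N : ℕ)

theorem S_zero_eq_sum {n : ℕ} (hn : 3 ≤ n) :
    S a d N 0 n = ∑ t ∈ Ico 2 n, (n.choose t : ℂ) * d ^ (n - t) * apPowerSum a d N t := by
  obtain ⟨m, rfl⟩ : ∃ m, n = m + 2 := ⟨n - 2, by omega⟩
  have hsq : (a + N * d) ^ 2 - a ^ 2 = d ^ 2 * N + 2 * d * apPowerSum a d N 1 := by
    simp [add_mul_pow_sub_pow_eq_sum_apPowerSum, sum_range_succ, apPowerSum_zero]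
  have hpow : (a + N * d) ^ (m + 2) - a ^ (m + 2) = d ^ (m + 2) * N
      + (m + 2) * d ^ (m + 1) * apPowerSum a d N 1
      + ∑ t ∈ Ico 2 (m + 2), ((m + 2).choose t : ℂ) * d ^ (m + 2 - t) * apPowerSum a d N t := by
    rw [add_mul_pow_sub_pow_eq_sum_apPowerSum, ← sum_range_add_sum_Ico _ (by omega : 2 ≤ m + 2)]
    simp [sum_range_succ, apPowerSum_zero]
  simp only [S]
  rw [hsq, add_sub_assoc, hpow, Nat.add_sub_cancel]
  push_cast
  ring

theorem S_eq_sum (j : ℕ) {n : ℕ} (hn : j + 3 ≤ n) :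
    S a d N j n = ∑ t ∈ Ico (j + 2) n, (n.choose t : ℂ) * d ^ (n - t) * apPowerSum a d N t := by
  induction j generalizing n with
  | zero => exact S_zero_eq_sum a d N hn
  | succ j ih =>
    have hj3 : (j : ℂ) + 3 ≠ 0 := by exact_mod_cast (show j + 3 ≠ 0 by omega)
    have hpow : d ^ (n - (j + 2)) = d ^ (n - (j + 1) - 2) * d := by
      rw [← pow_succ]; congr 1; omega
    simp only [S]
    rw [ih le_rfl, ih (by omega), sum_eq_sum_Ico_succ_bot (by omega : j + 2 < n),
      Nat.Ico_succ_singleton, sum_singleton, Nat.choose_succ_self_right,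
      show j + 3 - (j + 2) = 1 by omega, show n - j - 3 = n - (j + 1) - 2 by omega, hpow]
    push_cast
    field_simp
    ring

theorem S_add_three (j : ℕ) :
    S a d N j (j + 3) = (j + 3) * d * apPowerSum a d N (j + 2) := by
  rw [S_eq_sum a d N j le_rfl, Nat.Ico_succ_singleton, sum_singleton, Nat.choose_succ_self_right,
    show j + 3 - (j + 2) = 1 by omega]
  push_cast
  ring

end S

theorem augmented_matrix_det_general
    (a d : ℂ) (N : ℕ) (k : ℕ) (hk : 3 ≤ k)
    (M : Matrix (Fin (k + 1)) (Fin (k + 1)) ℂ)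
    (hM : ∀ i j : Fin (k + 1),
      M i j =
        if (j : ℕ) = k then (a + (N : ℂ) * d) ^ ((i : ℕ) + 1) - a ^ ((i : ℕ) + 1)
        else if (j : ℕ) ≤ (i : ℕ)
          then (((i : ℕ) + 1).choose (j : ℕ) : ℂ) * d ^ ((i : ℕ) - (j : ℕ) + 1)
          else 0) :
    M.det = (k.factorial : ℂ) * d ^ k * S a d N (k - 2) (k + 1) := by
  set L := binomialMatrix d (k + 1)
  have hM_eq : M = L.updateCol (Fin.last k) (L *ᵥ fun j => apPowerSum a d N j) := by
    ext i j
    rw [hM, binomialMatrix_mulVec_apPowerSum]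
    by_cases hj : j = Fin.last k
    · simp [hj]
    · have hjk : (j : ℕ) ≠ k := fun h => hj (Fin.ext h)
      simp [updateCol_ne hj, L, binomialMatrix, hjk]
  obtain ⟨j, rfl⟩ : ∃ j, k = j + 2 := ⟨k - 2, by omega⟩
  rw [hM_eq, det_updateCol_mulVec, det_binomialMatrix, Nat.add_sub_cancel, S_add_three,
    Nat.factorial_succ]
  push_cast
  ring

theorem augmented_matrix_det
    (a d : ℂ) (hd : d ≠ 0) (N : ℕ) (hN : 0 < N) (k : ℕ) (hk : 3 ≤ k)
    (M : Matrix (Fin (k + 1)) (Fin (k + 1)) ℂ)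
    (hM : ∀ i j : Fin (k + 1),
      M i j =
        if (j : ℕ) = k then (a + (N : ℂ) * d) ^ ((i : ℕ) + 1) - a ^ ((i : ℕ) + 1)
        else if (j : ℕ) ≤ (i : ℕ)
          then (((i : ℕ) + 1).choose (j : ℕ) : ℂ) * d ^ ((i : ℕ) - (j : ℕ) + 1)
          else 0) :
    M.det = (k.factorial : ℂ) * d ^ k * S a d N (k - 2) (k + 1) :=
  augmented_matrix_det_general a d N k hk M hM
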